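/- Let π be a valid function. If π is a weak facet, then π is a minimal valid function. -/

import Mathlib

/-- A finite-support function `y : ℝ → ℕ` is feasible if `∑ r, r·y(r) − f ∈ ℤ`. -/
def Feasible (f : ℝ) (y : ℝ →₀ ℕ) : Prop :=
  ∃ z : ℤ, (∑ r ∈ y.support, r * (y r : ℝ)) - f = (z : ℝ)

/-- `π` is a valid function: nonnegative, and `∑ r, π(r)·y(r) ≥ 1` for every feasible `y`. -/
def Valid (f : ℝ) (π : ℝ → ℝ) : Prop :=
  (∀ x, 0 ≤ π x) ∧
    ∀ y : ℝ →₀ ℕ, Feasible f y → 1 ≤ ∑ r ∈ y.support, π r * (y r : ℝ)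

/-- A valid function is minimal if no other valid function is pointwise ≤ it. -/
def MinimalValid (f : ℝ) (π : ℝ → ℝ) : Prop :=
  Valid f π ∧ ¬ ∃ π' : ℝ → ℝ, Valid f π' ∧ (∀ x, π' x ≤ π x) ∧ π' ≠ π

/-- `P(π)`: the set of feasible `y` with `∑ r, π(r)·y(r) = 1`. -/
def Pset (f : ℝ) (π : ℝ → ℝ) : Set (ℝ →₀ ℕ) :=
  {y | Feasible f y ∧ ∑ r ∈ y.support, π r * (y r : ℝ) = 1}

/-- `E(π) = {(x,y) : π(x) + π(y) = π(x+y)}`. -/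
def Eset (π : ℝ → ℝ) : Set (ℝ × ℝ) :=
  {p | π p.1 + π p.2 = π (p.1 + p.2)}

/-- A valid function `π` is a facet if every valid `π'` with `P(π) ⊆ P(π')` equals `π`. -/
def IsFacet (f : ℝ) (π : ℝ → ℝ) : Prop :=
  Valid f π ∧ ∀ π' : ℝ → ℝ, Valid f π' → Pset f π ⊆ Pset f π' → π' = π

/-- A valid function `π` is a weak facet if every valid `π'` with `P(π) ⊆ P(π')`
has `P(π) = P(π')`. -/
def IsWeakFacet (f : ℝ) (π : ℝ → ℝ) : Prop :=
  Valid f π ∧ ∀ π' : ℝ → ℝ, Valid f π' → Pset f π ⊆ Pset f π' → Pset f π = Pset f π'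

/-- A valid function `π` is extreme if whenever `π = (π¹ + π²)/2` with `π¹, π²` valid,
then `π¹ = π² = π`. -/
def ExtremeFunc (f : ℝ) (π : ℝ → ℝ) : Prop :=
  Valid f π ∧ ∀ π₁ π₂ : ℝ → ℝ, Valid f π₁ → Valid f π₂ →
    (∀ x, π x = (π₁ x + π₂ x) / 2) → π₁ = π ∧ π₂ = π

/-- `π` is piecewise linear: there is a closed, discrete set `B ⊆ ℝ` of breakpoints
such that `π` is affine on each connected component of `ℝ \ B`. -/
def PiecewiseLinear (π : ℝ → ℝ) : Prop :=
  ∃ B : Set ℝ, IsClosed B ∧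
    (∀ x ∈ B, ∃ ε > (0 : ℝ), ∀ y ∈ B, |y - x| < ε → y = x) ∧
    (∀ x ∉ B, ∃ a b : ℝ, ∀ z ∈ connectedComponentIn Bᶜ x, π z = a * z + b)

/-- `π` is continuous piecewise linear. -/
def ContPiecewiseLinear (π : ℝ → ℝ) : Prop :=
  PiecewiseLinear π ∧ Continuous π

/-!
A valid function `π'` lies above a minimal valid function `m` (Zorn's lemma: the pointwise
infimum of a chain of valid functions is valid, because every sum `∑ π(r) y(r)` is finite).
Minimality forces `m x ≤ ∑ m(r) y(r)` whenever `∑ r y(r) ≡ x (mod 1)`, since otherwise lowering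
`m x` to that sum would keep `m` valid. It also forces symmetry, `m a + m (f - a) = 1`: lowering
`m a` by a factor `1 + ε` must break validity at some feasible `y` that uses `a`, and removing one
copy of `a` from `y` and applying the previous inequality gives `m a + m (f - a) < 1 + ε`.

Now let `π` be a weak facet and `π' ≤ π` valid with `π' x < π x`. Take a minimal `m ≤ π'`.
Then `P(π) ⊆ P(m)`, hence `P(π) = P(m)`. By symmetry `e_x + e_{f-x} ∈ P(m) = P(π)`, so
`π x + π (f - x) = 1 = m x + m (f - x)`, which contradicts `m x < π x`.
-/

open Function
open Finsupp (single liftAddHom liftAddHom_apply_single single_add_erase single_le_iff)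

variable {f : ℝ} {g g' m : ℝ → ℝ} {y v : ℝ →₀ ℕ}

noncomputable def weightedSum (g : ℝ → ℝ) : (ℝ →₀ ℕ) →+ ℝ :=
  liftAddHom fun r => (AddMonoidHom.mulLeft (g r)).comp (Nat.castAddMonoidHom ℝ)

theorem weightedSum_apply (g : ℝ → ℝ) (y : ℝ →₀ ℕ) :
    weightedSum g y = ∑ r ∈ y.support, g r * (y r : ℝ) :=
  rfl

theorem weightedSum_single (g : ℝ → ℝ) (a : ℝ) (n : ℕ) : weightedSum g (single a n) = g a * n :=
  liftAddHom_apply_single _ a n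

theorem weightedSum_congr (h : ∀ r ∈ y.support, g r = g' r) :
    weightedSum g y = weightedSum g' y :=
  Finset.sum_congr rfl fun r hr => by simp [h r hr]

theorem weightedSum_mono (h : ∀ r ∈ y.support, g r ≤ g' r) :
    weightedSum g y ≤ weightedSum g' y :=
  Finset.sum_le_sum fun r hr => mul_le_mul_of_nonneg_right (h r hr) (Nat.cast_nonneg _)

theorem weightedSum_nonneg (h : ∀ r, 0 ≤ g r) (y : ℝ →₀ ℕ) : 0 ≤ weightedSum g y :=
  Finset.sum_nonneg fun r _ => mul_nonneg (h r) (Nat.cast_nonneg _)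

theorem weightedSum_eq_add_erase (g : ℝ → ℝ) (y : ℝ →₀ ℕ) (a : ℝ) :
    weightedSum g y = g a * y a + weightedSum g (y.erase a) := by
  conv_lhs => rw [← single_add_erase a y]
  rw [map_add, weightedSum_single]

theorem weightedSum_update (g : ℝ → ℝ) (y : ℝ →₀ ℕ) (a c : ℝ) :
    weightedSum (update g a c) y = c * y a + weightedSum g (y.erase a) := by
  rw [weightedSum_eq_add_erase _ _ a, update_self]
  congr 1
  refine weightedSum_congr fun r hr => update_of_ne ?_ c g
  rintro rfl
  simp at hr

theorem feasible_iff : Feasible f y ↔ ∃ z : ℤ, weightedSum id y - f = z :=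
  Iff.rfl

theorem Valid.one_le_weightedSum (h : Valid f g) (hy : Feasible f y) : 1 ≤ weightedSum g y :=
  h.2 y hy

theorem weightedSum_pair (g : ℝ → ℝ) (a b : ℝ) :
    weightedSum g (single a 1 + single b 1) = g a + g b := by
  simp [weightedSum_single]

theorem feasible_pair (f a : ℝ) : Feasible f (single a 1 + single (f - a) 1) :=
  feasible_iff.2 ⟨0, by rw [weightedSum_pair]; simp⟩

theorem Valid.one_le_apply_add_apply_sub (h : Valid f g) (a : ℝ) : 1 ≤ g a + g (f - a) :=
  weightedSum_pair g a (f - a) ▸ h.one_le_weightedSum (feasible_pair f a)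

theorem Valid.pset_subset_pset (hg : Valid f g) (hle : g ≤ g') : Pset f g' ⊆ Pset f g :=
  fun _ ⟨hy, hy1⟩ =>
    ⟨hy, le_antisymm (hy1 ▸ weightedSum_mono fun r _ => hle r) (hg.one_le_weightedSum hy)⟩

theorem Minimal.exists_weightedSum_update_lt_one (hm : Minimal (Valid f) m) {a c : ℝ}
    (hc₀ : 0 ≤ c) (hc : c < m a) : ∃ v, Feasible f v ∧ weightedSum (update m a c) v < 1 := by
  have hnot : ¬ Valid f (update m a c) := fun hv => by
    have := hm.2 hv (update_le_iff.2 ⟨hc.le, fun _ _ => le_rfl⟩) a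
    rw [update_self] at this
    exact this.not_gt hc
  simp only [Valid, not_and, not_forall, not_le, exists_prop] at hnot
  exact hnot (le_update_iff.2 ⟨hc₀, fun j _ => hm.1.1 j⟩)

theorem Minimal.apply_le_weightedSum (hm : Minimal (Valid f) m) {x : ℝ}
    (hy : ∃ z : ℤ, weightedSum id y - x = z) : m x ≤ weightedSum m y := by
  by_contra! hlt
  obtain ⟨v, hv, hv_lt⟩ :=
    hm.exists_weightedSum_update_lt_one (weightedSum_nonneg hm.1.1 y) hlt
  obtain ⟨z, hz⟩ := hy
  obtain ⟨z', hz'⟩ := feasible_iff.1 hv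
  -- `v` with each copy of `x` replaced by a copy of `y`
  have hfeas : Feasible f (v.erase x + v x • y) := by
    refine feasible_iff.2 ⟨z' + v x * z, ?_⟩
    rw [weightedSum_eq_add_erase id v x] at hz'
    rw [map_add, map_nsmul, nsmul_eq_mul]
    push_cast
    rw [← hz, ← hz']
    simp only [id]
    ring
  have := hm.1.one_le_weightedSum hfeas
  rw [map_add, map_nsmul, nsmul_eq_mul] at this
  rw [weightedSum_update] at hv_lt
  linarith

theorem Minimal.apply_add_apply_sub_le_weightedSum (hm : Minimal (Valid f) m) {a : ℝ}
    (hv : Feasible f v) (ha : v a ≠ 0) : m a + m (f - a) ≤ weightedSum m v := by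
  obtain ⟨v, rfl⟩ := le_iff_exists_add.1 (single_le_iff.2 (Nat.one_le_iff_ne_zero.2 ha))
  obtain ⟨z, hz⟩ := feasible_iff.1 hv
  have hsub : ∃ z : ℤ, weightedSum id v - (f - a) = z := ⟨z, by
    rw [← hz, map_add, weightedSum_single]
    simp only [id]
    ring⟩
  rw [map_add, weightedSum_single, Nat.cast_one, mul_one]
  linarith [hm.apply_le_weightedSum hsub]

theorem Minimal.apply_add_apply_sub_le_one (hm : Minimal (Valid f) m) {a : ℝ} (ha : 0 < m a) :
    m a + m (f - a) ≤ 1 := by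
  refine le_of_forall_pos_lt_add fun ε hε => ?_
  set c := m a / (1 + ε)
  have hca : c * (1 + ε) = m a := div_mul_cancel₀ _ (by positivity)
  obtain ⟨v, hv, hlt⟩ := hm.exists_weightedSum_update_lt_one (a := a) (c := c) (by positivity)
    (div_lt_self ha (by linarith))
  have hva : v a ≠ 0 := fun h0 => by
    have hv_ge := hm.1.one_le_weightedSum hv
    rw [weightedSum_eq_add_erase m v a, h0] at hv_ge
    rw [weightedSum_update, h0] at hlt
    simp only [Nat.cast_zero, mul_zero, zero_add] at hv_ge hlt
    linarith
  have hW := weightedSum_nonneg hm.1.1 (v.erase a)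
  have hk : (0 : ℝ) ≤ v a := Nat.cast_nonneg _
  calc m a + m (f - a) ≤ weightedSum m v := hm.apply_add_apply_sub_le_weightedSum hv hva
    _ = m a * v a + weightedSum m (v.erase a) := weightedSum_eq_add_erase m v a
    _ ≤ (1 + ε) * (c * v a + weightedSum m (v.erase a)) := by rw [← hca]; nlinarith
    _ = (1 + ε) * weightedSum (update m a c) v := by rw [weightedSum_update]
    _ < 1 + ε := by nlinarith

theorem Minimal.apply_add_apply_sub_eq_one (hm : Minimal (Valid f) m) (a : ℝ) :
    m a + m (f - a) = 1 := by
  have hone := hm.1.one_le_apply_add_apply_sub a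
  refine le_antisymm ?_ hone
  rcases (hm.1.1 a).eq_or_lt with h0 | hpos
  · have := hm.apply_add_apply_sub_le_one (a := f - a) (by linarith)
    rwa [sub_sub_cancel, add_comm] at this
  · exact hm.apply_add_apply_sub_le_one hpos

theorem valid_iInf_of_isChain {c : Set (ℝ → ℝ)} (hc₀ : c.Nonempty) (hc : IsChain (· ≥ ·) c)
    (hval : ∀ g ∈ c, Valid f g) : Valid f fun x => ⨅ g : c, (g : ℝ → ℝ) x := by
  classical
  have := hc₀.to_subtype
  set lb : ℝ → ℝ := fun x => ⨅ g : c, (g : ℝ → ℝ) x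
  have hlb_nonneg : ∀ x, 0 ≤ lb x := fun x => le_ciInf fun g => (hval g g.2).1 x
  refine ⟨hlb_nonneg, fun y hy => le_of_forall_pos_lt_add fun ε hε => ?_⟩
  set δ := ε / (weightedSum 1 y + 1)
  have hN : 0 ≤ weightedSum 1 y := weightedSum_nonneg (fun _ => zero_le_one) y
  have hδ : 0 < δ := by positivity
  choose sel hsel using fun x => exists_lt_of_ciInf_lt (lt_add_of_pos_right (lb x) hδ)
  obtain ⟨g, hg⟩ := (hc.directed (f := id) (r := (· ≥ ·))).finset_le (y.support.image sel)
  have hg_le : ∀ r ∈ y.support, (g : ℝ → ℝ) r ≤ lb r + δ := fun r hr =>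
    (hg (sel r) (Finset.mem_image_of_mem sel hr) r).trans (hsel r).le
  calc 1 ≤ weightedSum g y := (hval g g.2).one_le_weightedSum hy
    _ ≤ weightedSum (fun r => lb r + δ) y := weightedSum_mono hg_le
    _ = weightedSum lb y + δ * weightedSum 1 y := by
      simp only [weightedSum_apply, add_mul, Finset.sum_add_distrib, Finset.mul_sum, Pi.one_apply,
        one_mul]
    _ < weightedSum lb y + ε := by
      have : δ * (weightedSum 1 y + 1) = ε := div_mul_cancel₀ _ (by positivity)
      nlinarith

theorem exists_minimal_valid_le {π : ℝ → ℝ} (hπ : Valid f π) : ∃ m ≤ π, Minimal (Valid f) m := by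
  obtain ⟨m, hle, hmax⟩ := zorn_le_nonempty₀ (α := (ℝ → ℝ)ᵒᵈ) {g | Valid f (OrderDual.ofDual g)}
    (fun c hcv hc g hg => ⟨_, valid_iInf_of_isChain ⟨g, hg⟩ hc hcv,
      fun h hh x => ciInf_le ⟨0, by rintro _ ⟨k, rfl⟩; exact (hcv k.2).1 x⟩ (⟨h, hh⟩ : c)⟩)
    (OrderDual.toDual π) hπ
  exact ⟨m, hle, hmax⟩

theorem stmt4_general (f : ℝ) (π : ℝ → ℝ)
    (hwf : IsWeakFacet f π) :
    MinimalValid f π := by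
  refine ⟨hwf.1, fun ⟨π', hπ', hle, hne⟩ => ?_⟩
  obtain ⟨x, hx⟩ := Function.ne_iff.1 hne
  obtain ⟨m, hm_le, hm⟩ := exists_minimal_valid_le hπ'
  have hm_sym := hm.apply_add_apply_sub_eq_one x
  have hPm : Pset f π = Pset f m :=
    hwf.2 m hm.1 (hm.1.pset_subset_pset fun r => (hm_le r).trans (hle r))
  have hpair : single x 1 + single (f - x) 1 ∈ Pset f π :=
    hPm ▸ ⟨feasible_pair f x, (weightedSum_pair m x (f - x)).trans hm_sym⟩
  have hπ_sym : π x + π (f - x) = 1 := (weightedSum_pair π x (f - x)).symm.trans hpair.2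
  linarith [lt_of_le_of_ne (hle x) hx, hm_le x, hm_le (f - x), hle (f - x)]

theorem stmt4 (f : ℝ) (hf : f ∈ Set.Ioo (0 : ℝ) 1) (π : ℝ → ℝ)
    (hπ : Valid f π) (hwf : IsWeakFacet f π) :
    MinimalValid f π :=
  stmt4_general f π hwf
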